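/- Let C be a K-Banach coalgebra and M a right Banach C-comodule with coaction ρ_M : M → M ⊗̂ C. A closed subspace N ⊆ M is a closed C-subcomodule (ρ_M(N) ⊆ N ⊗̂ C) if and only if N is a closed submodule of M for the induced left C'-module structure λ · m = (id_M ⊗̄ λ)(ρ_M(m)). -/

import Mathlib

/-! The forward implication holds because each `id ⊗̄ λ` is continuous and sends an elementary
tensor `n ⊗ c` with `n ∈ N` to `λ(c) • n ∈ N`. For the converse, approximate `ρ n` by a finite
sum `w = ∑ mᵢ ⊗ cᵢ`. A discretely valued field is spherically complete, so the nonarchimedean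
Hahn–Banach theorem holds over `K`; it yields finite-rank operators `P = ∑ₖ λₖ(·) fₖ` on `C` of
norm `≤ 2` fixing all the `cᵢ`. Then `(id ⊗̄ P)(ρ n) = ∑ₖ (λₖ · n) ⊗ fₖ` lies in the span of
`N ⊗ C`, and its distance to `ρ n` is at most `3 ‖ρ n - w‖`. -/

/-- An abstract model of the completed (projective) tensor product `V ⊗̂ W` of normed
spaces over a nonarchimedean field `K`: a Banach space `T` together with a continuous
bilinear map `tm` of norm `≤ 1` with dense span, satisfying the universal property of
the completed projective tensor product. -/
structure BTensor (K : Type) [NontriviallyNormedField K] (V W : Type)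
    [NormedAddCommGroup V] [NormedSpace K V]
    [NormedAddCommGroup W] [NormedSpace K W] : Type 1 where
  T : Type
  [grp : NormedAddCommGroup T]
  [mod : NormedSpace K T]
  [cpl : CompleteSpace T]
  tm : V →L[K] W →L[K] T
  tm_norm : ∀ v w, ‖tm v w‖ ≤ ‖v‖ * ‖w‖
  dense_span : Dense (Submodule.span K (Set.range fun p : V × W => (tm p.1) p.2) : Set T)
  lift : ∀ (Z : Type) [NormedAddCommGroup Z] [NormedSpace K Z] [CompleteSpace Z],
      (V →L[K] W →L[K] Z) → (T →L[K] Z)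
  lift_tm : ∀ (Z : Type) [NormedAddCommGroup Z] [NormedSpace K Z] [CompleteSpace Z]
      (b : V →L[K] W →L[K] Z) (v : V) (w : W), lift Z b (tm v w) = b v w
  lift_norm : ∀ (Z : Type) [NormedAddCommGroup Z] [NormedSpace K Z] [CompleteSpace Z]
      (b : V →L[K] W →L[K] Z), ‖lift Z b‖ ≤ ‖b‖

attribute [instance] BTensor.grp BTensor.mod BTensor.cpl

/-- `K` is discretely valued: the value group of `K` is generated by a uniformizer. -/
def DiscretelyValued (K : Type) [NontriviallyNormedField K] : Prop :=
  ∃ π : K, 0 < ‖π‖ ∧ ‖π‖ < 1 ∧ ∀ x : K, x ≠ 0 → ∃ n : ℤ, ‖x‖ = ‖π‖ ^ n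

variable {K : Type} [NontriviallyNormedField K] [CompleteSpace K]

/-- the map `(ε ⊗̄ id) : C ⊗̂ C → C`. -/
noncomputable def BTensor.counitL {C : Type} [NormedAddCommGroup C] [NormedSpace K C]
    [CompleteSpace C] (t : BTensor K C C) (ε : C →L[K] K) : t.T →L[K] C :=
  t.lift C ((ContinuousLinearMap.lsmul K K : K →L[K] C →L[K] C).comp ε)

/-- the map `(id ⊗̄ ε) : C ⊗̂ C → C`. -/
noncomputable def BTensor.counitR {C : Type} [NormedAddCommGroup C] [NormedSpace K C]
    [CompleteSpace C] (t : BTensor K C C) (ε : C →L[K] K) : t.T →L[K] C :=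
  t.lift C (((ContinuousLinearMap.lsmul K K : K →L[K] C →L[K] C).comp ε).flip)

/-- the map `(id_M ⊗̄ λ) : M ⊗̂ C → M` used to define the induced `C'`-module structure
`λ · m = (id_M ⊗̄ λ)(ρ_M m)` on a Banach comodule `M`. -/
noncomputable def BTensor.act {M C : Type} [NormedAddCommGroup M] [NormedSpace K M]
    [CompleteSpace M] [NormedAddCommGroup C] [NormedSpace K C]
    (tM : BTensor K M C) (lam : C →L[K] K) : tM.T →L[K] M :=
  tM.lift M (((ContinuousLinearMap.lsmul K K : K →L[K] M →L[K] M).comp lam).flip)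

/-- the closed subspace `N ⊗̂ C` of `M ⊗̂ C` (closure of the span of elementary tensors
with first factor in `N`). -/
def BTensor.subTensor {M C : Type} [NormedAddCommGroup M] [NormedSpace K M]
    [NormedAddCommGroup C] [NormedSpace K C]
    (tM : BTensor K M C) (N : Submodule K M) : Set tM.T :=
  closure (Submodule.span K {z : tM.T | ∃ n ∈ N, ∃ c : C, z = tM.tm n c} : Set tM.T)

open Metric Filter Topology

theorem Metric.nonempty_iInter_closedBall_of_forall_exists_lt {X ι : Type*} [PseudoMetricSpace X]
    [CompleteSpace X] (a : ι → X) (r : ι → ℝ) (h : ∀ i j, dist (a i) (a j) ≤ max (r i) (r j))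
    (hr : ∀ δ > 0, ∃ i, r i < δ) : (⋂ i, closedBall (a i) (r i)).Nonempty := by
  have hhalf : Tendsto (fun n : ℕ => ((1 : ℝ) / 2) ^ n) atTop (𝓝 0) :=
    tendsto_pow_atTop_nhds_zero_of_lt_one (by norm_num) (by norm_num)
  choose i hi using fun n : ℕ => hr ((1 / 2) ^ n) (by positivity)
  have hri : ∀ n N, N ≤ n → r (i n) ≤ (1 / 2) ^ N := fun n N hn =>
    (hi n).le.trans (pow_le_pow_of_le_one (by norm_num) (by norm_num) hn)
  have hdist : ∀ n m N, N ≤ n → N ≤ m → dist (a (i n)) (a (i m)) ≤ (1 / 2) ^ N :=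
    fun n m N hn hm => (h _ _).trans (max_le (hri n N hn) (hri m N hm))
  obtain ⟨c, hc⟩ := cauchySeq_tendsto_of_complete (cauchySeq_of_le_tendsto_0 _ hdist hhalf)
  refine ⟨c, Set.mem_iInter.2 fun j => mem_closedBall'.2 ?_⟩
  have hbound : Tendsto (fun n => max (r j) ((1 / 2) ^ n)) atTop (𝓝 (r j)) := by
    have hrj : 0 ≤ r j := by simpa using h j j
    simpa [hrj] using (tendsto_const_nhds (x := r j)).max hhalf
  exact le_of_tendsto_of_tendsto' ((tendsto_const_nhds (x := a j)).dist hc) hbound fun n =>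
    (h _ _).trans (max_le_max le_rfl (hi n).le)

def Submodule.FixedByFiniteRank {C : Type} [NormedAddCommGroup C] [NormedSpace K C]
    (F : Submodule K C) (B : ℝ) : Prop :=
  ∃ (r : ℕ) (f : Fin r → C) (lam : Fin r → C →L[K] K),
    (∀ c ∈ F, ∑ k, lam k c • f k = c) ∧ ∀ c, ‖∑ k, lam k c • f k‖ ≤ B * ‖c‖

namespace DiscretelyValued

theorem exists_norm_gap {K : Type} [NontriviallyNormedField K] (hdv : DiscretelyValued K)
    {ρ : ℝ} (hρ : 0 < ρ) : ∃ s, ρ < s ∧ ∀ y : K, ‖y‖ < s → ‖y‖ ≤ ρ := by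
  obtain ⟨π, hπ0, hπ1, hπ⟩ := hdv
  have ha : 1 < ‖π‖⁻¹ := (one_lt_inv₀ hπ0).2 hπ1
  obtain ⟨n, hn, hn'⟩ := exists_mem_Ico_zpow hρ ha
  refine ⟨‖π‖⁻¹ ^ (n + 1), hn', fun y hy => ?_⟩
  rcases eq_or_ne y 0 with rfl | hy0
  · simpa using hρ.le
  obtain ⟨m, hm⟩ := hπ y hy0
  rw [hm, ← neg_neg m, ← inv_zpow'] at hy ⊢
  rw [zpow_lt_zpow_iff_right₀ ha] at hy
  exact (zpow_le_zpow_right₀ ha.le (by omega)).trans hn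

theorem nonempty_iInter_closedBall (hdv : DiscretelyValued K) {ι : Type*} [Nonempty ι]
    (a : ι → K) (r : ι → ℝ) (h : ∀ i j, dist (a i) (a j) ≤ max (r i) (r j)) :
    (⋂ i, closedBall (a i) (r i)).Nonempty := by
  by_cases hr : ∀ δ > 0, ∃ i, r i < δ
  · exact nonempty_iInter_closedBall_of_forall_exists_lt a r h hr
  push Not at hr
  obtain ⟨δ, hδ, hδr⟩ := hr
  obtain ⟨s, hs, hgap⟩ := hdv.exists_norm_gap (hδ.trans_le (le_ciInf hδr))
  obtain ⟨i₀, hi₀⟩ := exists_lt_of_ciInf_lt hs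
  refine ⟨a i₀, Set.mem_iInter.2 fun i => mem_closedBall'.2 ?_⟩
  rcases le_total (r i₀) (r i) with hle | hlt
  · exact (h i i₀).trans (max_le le_rfl hle)
  · have hclose := (h i i₀).trans (max_le hlt le_rfl)
    rw [dist_eq_norm] at hclose ⊢
    exact (hgap _ (hclose.trans_lt hi₀)).trans (ciInf_le ⟨δ, Set.forall_mem_range.2 hδr⟩ i)

variable {C : Type} [NormedAddCommGroup C] [NormedSpace K C] [IsUltrametricDist C]

theorem exists_supSpanSingleton_norm_le (hdv : DiscretelyValued K) (p : C →ₗ.[K] K) {B : ℝ}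
    (hB : 0 ≤ B) (hp : ∀ v : p.domain, ‖p v‖ ≤ B * ‖(v : C)‖) {x : C} (hx : x ∉ p.domain) :
    ∃ c : K, ∀ v, ‖p.supSpanSingleton x c hx v‖ ≤ B * ‖(v : C)‖ := by
  have hpair : ∀ v w : p.domain, dist (p v) (p w) ≤ max (B * ‖x - v‖) (B * ‖x - w‖) := by
    intro v w
    rw [dist_eq_norm, ← p.map_sub, ← mul_max_of_nonneg _ _ hB]
    refine (hp _).trans (mul_le_mul_of_nonneg_left ?_ hB)
    simpa only [Submodule.coe_sub, dist_eq_norm, norm_sub_rev (v : C) x] using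
      dist_triangle_max (v : C) x w
  obtain ⟨c, hc⟩ := Set.nonempty_iInter.1 <| hdv.nonempty_iInter_closedBall _ _ hpair
  refine ⟨c, ?_⟩
  rintro ⟨_, hv⟩
  obtain ⟨g, hg, _, ha, rfl⟩ := Submodule.mem_sup.1 hv
  obtain ⟨a, rfl⟩ := Submodule.mem_span_singleton.1 ha
  rw [LinearPMap.supSpanSingleton_apply_mk _ _ _ hx _ hg, RingHom.id_apply]
  rcases eq_or_ne a 0 with rfl | ha
  · simpa using hp ⟨g, hg⟩
  have hcv := mem_closedBall'.1 (hc (-a⁻¹ • ⟨g, hg⟩))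
  rw [dist_eq_norm, p.map_smul] at hcv
  calc ‖p ⟨g, hg⟩ + a • c‖ = ‖a‖ * ‖(-a⁻¹) • p ⟨g, hg⟩ - c‖ := by
        rw [← norm_neg, ← norm_smul, smul_eq_mul, smul_eq_mul, smul_eq_mul]
        congr 1; field_simp; ring
    _ ≤ ‖a‖ * (B * ‖x - (-a⁻¹) • g‖) := by gcongr; exact hcv
    _ = B * ‖g + a • x‖ := by
        rw [mul_left_comm, ← norm_smul, smul_sub, smul_smul, mul_neg, mul_inv_cancel₀ ha]
        rw [neg_one_smul, sub_neg_eq_add, add_comm]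

theorem exists_extension_norm_le (hdv : DiscretelyValued K) (p : C →ₗ.[K] K) {B : ℝ}
    (hB : 0 ≤ B) (hp : ∀ v : p.domain, ‖p v‖ ≤ B * ‖(v : C)‖) :
    ∃ g : C →L[K] K, (∀ v : p.domain, g v = p v) ∧ ∀ c, ‖g c‖ ≤ B * ‖c‖ := by
  set S := {q : C →ₗ.[K] K | ∀ v : q.domain, ‖q v‖ ≤ B * ‖(v : C)‖}
  have hchain : ∀ c ⊆ S, IsChain (· ≤ ·) c → ∀ y ∈ c, ∃ ub ∈ S, ∀ z ∈ c, z ≤ ub := by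
    intro c hcS hc y hy
    refine ⟨LinearPMap.sSup c hc.directedOn, ?_, fun _ => LinearPMap.le_sSup hc.directedOn⟩
    rintro ⟨v, hv⟩
    obtain ⟨q, hqc, hvq⟩ := (LinearPMap.mem_domain_sSup_iff ⟨y, hy⟩ hc.directedOn).1 hv
    rw [LinearPMap.sSup_apply hc.directedOn hqc ⟨v, hvq⟩]
    exact hcS hqc ⟨v, hvq⟩
  obtain ⟨⟨D, q⟩, hpq, hqS, hmax⟩ := zorn_le_nonempty₀ S hchain p hp
  obtain rfl : D = ⊤ := by
    refine Submodule.eq_top_iff'.2 fun x => by_contra fun hx => ?_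
    obtain ⟨c, hc⟩ := hdv.exists_supSpanSingleton_norm_le _ hB hqS hx
    exact hx ((hmax hc (LinearPMap.left_le_sup _ _ _)).1 <|
      Submodule.mem_sup_right (Submodule.mem_span_singleton_self x))
  let g : C →ₗ[K] K := q.comp (LinearMap.id.codRestrict ⊤ fun _ => trivial)
  exact ⟨g.mkContinuous B fun c => hqS ⟨c, trivial⟩, fun v => (hpq.2 rfl).symm,
    fun c => hqS ⟨c, trivial⟩⟩

theorem exists_dual_eq_one (hdv : DiscretelyValued K) {F : Submodule K C} {x : C}
    (hx : 0 < infDist x F) :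
    ∃ μ : C →L[K] K, μ x = 1 ∧ (∀ g ∈ F, μ g = 0) ∧ ∀ c, ‖μ c‖ ≤ (infDist x F)⁻¹ * ‖c‖ := by
  have hxF : x ∉ F := fun h => hx.ne' (infDist_zero_of_mem h)
  set p := (⟨F, 0⟩ : C →ₗ.[K] K).supSpanSingleton x 1 hxF
  have hp : ∀ v : p.domain, ‖p v‖ ≤ (infDist x F)⁻¹ * ‖(v : C)‖ := by
    rintro ⟨_, hv⟩
    obtain ⟨g, hg, _, ha, rfl⟩ := Submodule.mem_sup.1 hv
    obtain ⟨a, rfl⟩ := Submodule.mem_span_singleton.1 ha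
    rw [LinearPMap.supSpanSingleton_apply_mk _ _ _ hxF _ hg]
    rcases eq_or_ne a 0 with rfl | ha
    · simpa using mul_nonneg (inv_nonneg.2 hx.le) (norm_nonneg g)
    rw [le_inv_mul_iff₀ hx]
    calc infDist x F * ‖0 + a • (1 : K)‖ = ‖a‖ * infDist x F := by simp [mul_comm]
      _ ≤ ‖a‖ * ‖x - (-a⁻¹) • g‖ := by
          gcongr
          simpa [dist_eq_norm] using infDist_le_dist_of_mem (F.smul_mem (-a⁻¹) hg)
      _ = ‖g + a • x‖ := by
          rw [← norm_smul, smul_sub, smul_smul, mul_neg, mul_inv_cancel₀ ha, neg_one_smul,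
            sub_neg_eq_add, add_comm]
  obtain ⟨μ, hμp, hμ⟩ := hdv.exists_extension_norm_le p (by positivity) hp
  refine ⟨μ, ?_, fun g hg => ?_, hμ⟩
  · exact (hμp _).trans (LinearPMap.supSpanSingleton_apply_self _ _ hxF)
  · exact (hμp ⟨g, Submodule.mem_sup_left hg⟩).trans
      (LinearPMap.supSpanSingleton_apply_mk_of_mem _ _ hxF hg)

theorem fixedByFiniteRank_sup_span_singleton (hdv : DiscretelyValued K) {F : Submodule K C}
    [FiniteDimensional K F] {x : C} (hx : x ∉ F) {B' B : ℝ} (hB' : 1 < B') (hB : B' < B)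
    (hF : F.FixedByFiniteRank B') : ((K ∙ x) ⊔ F).FixedByFiniteRank B := by
  obtain ⟨r, f, lam, hfix, hbound⟩ := hF
  have hd : 0 < infDist x F := (Submodule.closed_of_finiteDimensional F).notMem_iff_infDist_pos
    ⟨0, F.zero_mem⟩ |>.1 hx
  obtain ⟨μ, hμx, hμF, hμ⟩ := hdv.exists_dual_eq_one hd
  -- `x' = x - f₀` is an almost-closest representative of `x` modulo `F`
  obtain ⟨f₀, hf₀, hxf₀⟩ := (infDist_lt_iff ⟨0, F.zero_mem⟩).1
    (lt_mul_of_one_lt_right hd ((one_lt_div (by linarith)).2 hB))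
  set x' := x - f₀
  set S := ContinuousLinearMap.id K C - μ.smulRight x'
  refine ⟨r + 1, Fin.cons x' f, Fin.cons μ fun k => (lam k).comp S, ?_, fun c => ?_⟩ <;>
    simp only [Fin.sum_univ_succ, Fin.cons_zero, Fin.cons_succ, ContinuousLinearMap.comp_apply]
  · intro c hc
    obtain ⟨_, ha, z, hz, rfl⟩ := Submodule.mem_sup.1 hc
    obtain ⟨a, rfl⟩ := Submodule.mem_span_singleton.1 ha
    have hμc : μ (a • x + z) = a := by simp [hμF z hz, hμx]
    have hSc : S (a • x + z) = z + a • f₀ := by simp [S, hμc, x', smul_sub]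
    rw [hSc, hfix _ (F.add_mem hz (F.smul_mem a hf₀)), hμc]
    simp only [x', smul_sub]; abel
  · have ht : 1 ≤ B / B' := (one_le_div (by linarith)).2 hB.le
    have hμc : ‖μ c • x'‖ ≤ B / B' * ‖c‖ := by
      rw [norm_smul]
      calc ‖μ c‖ * ‖x'‖ ≤ (infDist x F)⁻¹ * ‖c‖ * (infDist x F * (B / B')) := by
            gcongr
            · exact hμ c
            · simpa [x', dist_eq_norm] using hxf₀.le
        _ = B / B' * ‖c‖ := by field_simp
    have hSc : ‖S c‖ ≤ B / B' * ‖c‖ := by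
      change ‖c - μ c • x'‖ ≤ _
      rw [sub_eq_add_neg]
      refine (IsUltrametricDist.norm_add_le_max _ _).trans (max_le ?_ (by rwa [norm_neg]))
      exact le_mul_of_one_le_left (norm_nonneg c) ht
    refine (IsUltrametricDist.norm_add_le_max _ _).trans (max_le ?_ ?_)
    · exact hμc.trans (by gcongr; exact div_le_self (by linarith) hB'.le)
    · calc _ ≤ B' * ‖S c‖ := hbound _
        _ ≤ B' * (B / B' * ‖c‖) := by gcongr
        _ = B * ‖c‖ := by field_simp

theorem fixedByFiniteRank_span_finset (hdv : DiscretelyValued K) (s : Finset C) {B : ℝ}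
    (hB : 1 < B) : (Submodule.span K (s : Set C)).FixedByFiniteRank B := by
  classical
  induction s using Finset.induction_on generalizing B with
  | empty => exact ⟨0, Fin.elim0, Fin.elim0, by simp, fun c => by simp; positivity⟩
  | insert x s _ ih =>
    rw [Finset.coe_insert, Submodule.span_insert]
    by_cases hx : x ∈ Submodule.span K (s : Set C)
    · rw [sup_eq_right.2 ((Submodule.span_singleton_le_iff_mem _ _).2 hx)]
      exact ih hB
    obtain ⟨B', hB', hB'B⟩ := exists_between hB
    exact hdv.fixedByFiniteRank_sup_span_singleton hx hB' hB'B (ih hB')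

end DiscretelyValued

namespace BTensor

variable {K : Type} [NontriviallyNormedField K] {M C : Type} [NormedAddCommGroup M]
  [NormedSpace K M] [NormedAddCommGroup C] [NormedSpace K C] (tM : BTensor K M C)

theorem ext_tm {Z : Type} [NormedAddCommGroup Z] [NormedSpace K Z] {A A' : tM.T →L[K] Z}
    (h : ∀ m c, A (tM.tm m c) = A' (tM.tm m c)) : A = A' :=
  ContinuousLinearMap.ext_on tM.dense_span (Set.forall_mem_range.2 fun p => h p.1 p.2)

@[simp]
theorem act_tm [CompleteSpace M] (lam : C →L[K] K) (m : M) (c : C) :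
    tM.act lam (tM.tm m c) = lam c • m := by
  simp [act, tM.lift_tm]

/-- The operator `id_M ⊗̄ P` on `M ⊗̂ C`. -/
noncomputable def mapRight (P : C →L[K] C) : tM.T →L[K] tM.T :=
  tM.lift tM.T (tM.tm.flip.comp P).flip

@[simp]
theorem mapRight_tm (P : C →L[K] C) (m : M) (c : C) :
    tM.mapRight P (tM.tm m c) = tM.tm m (P c) := by
  simp [mapRight, tM.lift_tm]

theorem norm_mapRight_le (P : C →L[K] C) : ‖tM.mapRight P‖ ≤ ‖P‖ := by
  refine (tM.lift_norm _ _).trans <| ContinuousLinearMap.opNorm_le_bound₂ _ (norm_nonneg _)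
    fun m c => ?_
  calc ‖tM.tm m (P c)‖ ≤ ‖m‖ * ‖P c‖ := tM.tm_norm _ _
    _ ≤ ‖m‖ * (‖P‖ * ‖c‖) := by gcongr; exact P.le_opNorm c
    _ = ‖P‖ * ‖m‖ * ‖c‖ := by ring

theorem mapRight_apply_eq_sum [CompleteSpace M] {P : C →L[K] C} {r : ℕ} {f : Fin r → C}
    {lam : Fin r → C →L[K] K} (hP : ∀ c, P c = ∑ k, lam k c • f k) (z : tM.T) :
    tM.mapRight P z = ∑ k, tM.tm (tM.act (lam k) z) (f k) := by
  have : tM.mapRight P = ∑ k, (tM.tm.flip (f k)).comp (tM.act (lam k)) :=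
    tM.ext_tm fun m c => by simp [hP]
  simp [this]

theorem act_mem_of_mem_subTensor [CompleteSpace M] {N : Submodule K M} (hN : IsClosed (N : Set M))
    {z : tM.T} (hz : z ∈ tM.subTensor N) (lam : C →L[K] K) : tM.act lam z ∈ N := by
  have hspan : Submodule.span K {z : tM.T | ∃ n ∈ N, ∃ c : C, z = tM.tm n c} ≤
      N.comap (tM.act lam).toLinearMap := by
    rw [Submodule.span_le]
    rintro _ ⟨n, hn, c, rfl⟩
    simpa using N.smul_mem (lam c) hn
  simpa [hN.closure_eq] using map_mem_closure (tM.act lam).continuous hz fun _ h => hspan h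

theorem mem_subTensor_of_forall_act_mem [CompleteSpace K] [CompleteSpace M] [IsUltrametricDist C]
    (hdv : DiscretelyValued K) {N : Submodule K M}
    {z : tM.T} (hz : ∀ lam, tM.act lam z ∈ N) : z ∈ tM.subTensor N := by
  classical
  refine Metric.mem_closure_iff.2 fun ε hε => ?_
  obtain ⟨w, hw, hzw⟩ := Metric.mem_closure_iff.1 (tM.dense_span z) (ε / 3) (by positivity)
  obtain ⟨cf, hcf⟩ := Finsupp.mem_span_range_iff_exists_finsupp.1 hw
  obtain ⟨r, f, lam, hfix, hbound⟩ :=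
    hdv.fixedByFiniteRank_span_finset (cf.support.image Prod.snd) one_lt_two
  set P : C →L[K] C := ∑ k, (lam k).smulRight (f k)
  have hP : ∀ c, P c = ∑ k, lam k c • f k := by simp [P]
  have hPw : tM.mapRight P w = w := by
    simp only [← hcf, Finsupp.sum, map_sum, map_smul, mapRight_tm]
    refine Finset.sum_congr rfl fun p hp => ?_
    rw [hP, hfix _ (Submodule.subset_span (Finset.mem_image_of_mem _ hp))]
  have hPz : tM.mapRight P z ∈ Submodule.span K {z : tM.T | ∃ n ∈ N, ∃ c : C, z = tM.tm n c} := by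
    rw [tM.mapRight_apply_eq_sum hP]
    exact Submodule.sum_mem _ fun k _ => Submodule.subset_span ⟨_, hz (lam k), f k, rfl⟩
  have hPnorm : ‖tM.mapRight P‖ ≤ 2 := (tM.norm_mapRight_le P).trans <|
    ContinuousLinearMap.opNorm_le_bound _ zero_le_two fun c => hP c ▸ hbound c
  have hdist : dist w (tM.mapRight P z) ≤ 2 * dist z w :=
    calc dist w (tM.mapRight P z) = ‖tM.mapRight P (w - z)‖ := by rw [map_sub, hPw, dist_eq_norm]
      _ ≤ 2 * ‖w - z‖ := (ContinuousLinearMap.le_opNorm _ _).trans (by gcongr)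
      _ = 2 * dist z w := by rw [dist_eq_norm']
  exact ⟨_, hPz, by linarith [dist_triangle z w (tM.mapRight P z)]⟩

theorem mem_subTensor_iff [CompleteSpace K] [CompleteSpace M] [IsUltrametricDist C]
    (hdv : DiscretelyValued K) {N : Submodule K M} (hN : IsClosed (N : Set M)) (z : tM.T) :
    z ∈ tM.subTensor N ↔ ∀ lam, tM.act lam z ∈ N :=
  ⟨tM.act_mem_of_mem_subTensor hN, tM.mem_subTensor_of_forall_act_mem hdv⟩

end BTensor

theorem subcomodule_iff_dual_submodule_general
    (hdv : DiscretelyValued K)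
    (C : Type) [NormedAddCommGroup C] [NormedSpace K C]
    [IsUltrametricDist C]
    (M : Type) [NormedAddCommGroup M] [NormedSpace K M] [CompleteSpace M]
    -- the comodule `M`
    (tM : BTensor K M C) (ρ : M →L[K] tM.T)
    -- the closed subspace `N`
    (N : Submodule K M) (hN : IsClosed (N : Set M)) :
    (∀ n ∈ N, ρ n ∈ tM.subTensor N) ↔
    (∀ (lam : C →L[K] K), ∀ n ∈ N, tM.act lam (ρ n) ∈ N) := by
  simp only [tM.mem_subTensor_iff hdv hN]
  exact ⟨fun h lam n hn => h n hn lam, fun h n hn lam => h lam n hn⟩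

/-- Let `C` be a `K`-Banach coalgebra and `M` a right Banach
`C`-comodule with coaction `ρ : M → M ⊗̂ C`.  A closed subspace `N ⊆ M` is a closed
`C`-subcomodule (`ρ(N) ⊆ N ⊗̂ C`) if and only if `N` is a closed submodule of `M`
for the induced left `C'`-module structure `λ · m = (id_M ⊗̄ λ)(ρ m)`. -/
theorem subcomodule_iff_dual_submodule
    [IsUltrametricDist K] (hdv : DiscretelyValued K)
    (C : Type) [NormedAddCommGroup C] [NormedSpace K C] [CompleteSpace C]
    [IsUltrametricDist C]
    (M : Type) [NormedAddCommGroup M] [NormedSpace K M] [CompleteSpace M]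
    [IsUltrametricDist M]
    -- the coalgebra `C`
    (t : BTensor K C C) (Δ : C →L[K] t.T) (ε : C →L[K] K)
    (hcounitL : (t.counitL ε).comp Δ = ContinuousLinearMap.id K C)
    (hcounitR : (t.counitR ε).comp Δ = ContinuousLinearMap.id K C)
    -- the comodule `M`
    (tM : BTensor K M C) (ρ : M →L[K] tM.T)
    (hcounit : (tM.act ε).comp ρ = ContinuousLinearMap.id K M)
    -- coassociativity of the coaction: `(ρ ⊗ id) ∘ ρ = (id ⊗ Δ) ∘ ρ`
    (tMl : BTensor K tM.T C) (tMr : BTensor K M t.T)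
    (asc : tMr.T →L[K] tMl.T)
    (hasc : ∀ (m : M) (c d : C), asc (tMr.tm m (t.tm c d)) = tMl.tm (tM.tm m c) d)
    (hcoassoc : (tM.lift tMl.T (tMl.tm.comp ρ)).comp ρ =
        (asc.comp (tM.lift tMr.T ((tMr.tm.flip.comp Δ).flip))).comp ρ)
    -- the closed subspace `N`
    (N : Submodule K M) (hN : IsClosed (N : Set M)) :
    (∀ n ∈ N, ρ n ∈ tM.subTensor N) ↔
    (∀ (lam : C →L[K] K), ∀ n ∈ N, tM.act lam (ρ n) ∈ N) :=
  subcomodule_iff_dual_submodule_general hdv C M tM ρ N hN
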